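/- arXiv:2405.01214 — 2 statements merged into one kernel-verified Lean document; each statement's English description precedes it below -/
import Mathlib

section
/- Let A, B be finite subsets of a metric space (M,d), fix β > 0, and let δ > 0 be such that for every closed set S ⊆ M, |S ∩ A| ≤ |S^δ ∩ B| + δ. Then for all r > 0 and all k > δ, Cr^β_{r,k}(A) ⊆ Cr^β_{r', k−δ}(B), where r' = max{ 2(r + βδ), (1+β^{-1})r + δ }. -/
open Metric ENNReal

/-- The `k`-core distance of `x` to a finite set `A`:
`inf { r ≥ 0 : |B(x,r) ∩ A| ≥ ⌈k⌉ }` (valued in `ℝ≥0∞`). -/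
noncomputable def coreDist {M : Type*} [MetricSpace M] (A : Finset M) (k : ℝ) (x : M) : ℝ≥0∞ :=
  sInf {r : ℝ≥0∞ | ⌈k⌉ ≤ (((A : Set M) ∩ {y | edist x y ≤ r}).ncard : ℤ)}

/-- The core dissimilarity `Λ^β_k(a,x) = max { β·Core^A_k(a), d(a,x) }`. -/
noncomputable def lam {M : Type*} [MetricSpace M] (A : Finset M) (β k : ℝ) (a x : M) : ℝ≥0∞ :=
  max (ENNReal.ofReal β * coreDist A k a) (edist a x)

/-- The multicover bifiltration. -/
def Cov {M : Type*} [MetricSpace M] (A : Finset M) (r k : ℝ) : Set M :=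
  {x | ⌈k⌉ ≤ (((A : Set M) ∩ Metric.closedBall x r).ncard : ℤ)}

/-- The core bifiltration. -/
def Cr {M : Type*} [MetricSpace M] (A : Finset M) (β r k : ℝ) : Set M :=
  ⋃ a ∈ A, {x | lam A β k a x ≤ ENNReal.ofReal r}

/-- The closed `δ`-thickening of a set `S`. -/
def thick {M : Type*} [MetricSpace M] (S : Set M) (δ : ℝ) : Set M :=
  {x | ∃ s ∈ S, dist s x ≤ δ}

lemma coreDist_mem {M : Type*} [MetricSpace M] (A : Finset M) (k : ℝ) (a : M)
    (h : coreDist A k a < ⊤) :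
    ⌈k⌉ ≤ (((A : Set M) ∩ {y | edist a y ≤ coreDist A k a}).ncard : ℤ) := by
  classical
  set m := coreDist A k a with hm
  set μ := (A.filter (fun y => m < edist a y)).inf (fun y => edist a y) with hμ
  have hmμ : m < μ := by
    rw [hμ, Finset.lt_inf_iff h]
    intro b hb
    exact (Finset.mem_filter.mp hb).2
  have : sInf {r : ℝ≥0∞ | ⌈k⌉ ≤ (((A : Set M) ∩ {y | edist a y ≤ r}).ncard : ℤ)} < μ := hmμ
  rw [sInf_lt_iff] at this
  obtain ⟨ρ, hρC, hρμ⟩ := this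
  have hsub : (A : Set M) ∩ {y | edist a y ≤ ρ} ⊆ (A : Set M) ∩ {y | edist a y ≤ m} := by
    rintro y ⟨hyA, hyρ⟩
    refine ⟨hyA, ?_⟩
    by_contra hgt
    simp only [Set.mem_setOf_eq, not_le] at hgt
    have : μ ≤ edist a y :=
      Finset.inf_le (Finset.mem_filter.mpr ⟨hyA, hgt⟩)
    exact absurd (this.trans hyρ) (not_le.mpr hρμ)
  have hfin : ((A : Set M) ∩ {y | edist a y ≤ m}).Finite :=
    A.finite_toSet.inter_of_left _
  calc (⌈k⌉ : ℤ) ≤ (((A : Set M) ∩ {y | edist a y ≤ ρ}).ncard : ℤ) := hρC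
    _ ≤ _ := by exact_mod_cast Set.ncard_le_ncard hsub hfin

theorem stmt13 {M : Type*} [MetricSpace M] (A B : Finset M) (β : ℝ) (hβ : 0 < β)
    (δ : ℝ) (hδ : 0 < δ)
    (hstab : ∀ S : Set M, IsClosed S →
      (((S ∩ (A : Set M)).ncard : ℝ)) ≤ ((thick S δ ∩ (B : Set M)).ncard : ℝ) + δ)
    (r k : ℝ) (hr : 0 < r) (hk : δ < k) :
    Cr A β r k ⊆ Cr B β (max (2 * (r + β * δ)) ((1 + β⁻¹) * r + δ)) (k - δ) := by
  intro x hx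
  simp only [Cr, Set.mem_iUnion, Set.mem_setOf_eq, exists_prop] at hx ⊢
  obtain ⟨a, haA, hlam⟩ := hx
  rw [lam, max_le_iff] at hlam
  obtain ⟨h1, h2⟩ := hlam
  have hβ0 : (ENNReal.ofReal β) ≠ 0 := by
    simpa using (ENNReal.ofReal_pos.mpr hβ).ne'
  have hrβ0 : 0 ≤ r / β := by positivity
  have hcle : coreDist A k a ≤ ENNReal.ofReal (r / β) := by
    rw [ENNReal.ofReal_div_of_pos hβ, ENNReal.le_div_iff_mul_le (Or.inl hβ0)
      (Or.inl ENNReal.ofReal_ne_top), mul_comm]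
    exact h1
  have hclt : coreDist A k a < ⊤ :=
    lt_of_le_of_lt hcle ENNReal.ofReal_lt_top
  -- the closed set S
  set S : Set M := {y | edist a y ≤ ENNReal.ofReal (r / β)} with hS
  have hSclosed : IsClosed S := by
    have : Continuous fun y : M => edist a y := continuous_const.edist continuous_id
    exact isClosed_le this continuous_const
  have hSA : (⌈k⌉ : ℤ) ≤ ((S ∩ (A : Set M)).ncard : ℤ) := by
    have hsub : (A : Set M) ∩ {y | edist a y ≤ coreDist A k a} ⊆ S ∩ (A : Set M) := by
      rintro y ⟨hyA, hy⟩
      exact ⟨le_trans hy hcle, hyA⟩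
    have hfin : (S ∩ (A : Set M)).Finite := A.finite_toSet.inter_of_right _
    calc (⌈k⌉ : ℤ) ≤ _ := coreDist_mem A k a hclt
      _ ≤ _ := by exact_mod_cast Set.ncard_le_ncard hsub hfin
  have hstabS := hstab S hSclosed
  have hkA : (k : ℝ) ≤ ((S ∩ (A : Set M)).ncard : ℝ) := by
    have := (Int.ceil_le (α := ℝ)).mp (le_refl ⌈k⌉)
    calc k ≤ (⌈k⌉ : ℝ) := Int.le_ceil k
      _ ≤ _ := by exact_mod_cast hSA
  have hkB : k - δ ≤ ((thick S δ ∩ (B : Set M)).ncard : ℝ) := by linarith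
  have hceilB : (⌈k - δ⌉ : ℤ) ≤ ((thick S δ ∩ (B : Set M)).ncard : ℤ) := by
    exact_mod_cast Int.ceil_le.mpr hkB
  -- pick b ∈ thick S δ ∩ B
  have hpos : 0 < (thick S δ ∩ (B : Set M)).ncard := by
    have h1' : (1 : ℤ) ≤ ⌈k - δ⌉ := by
      have : (0 : ℝ) < k - δ := by linarith
      exact_mod_cast Int.ceil_pos.mpr this
    omega
  obtain ⟨b, hbT, hbB⟩ := Set.nonempty_of_ncard_ne_zero hpos.ne'
  obtain ⟨s, hsS, hsb⟩ := hbT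
  have hsd : dist a s ≤ r / β := by
    have h := hsS
    simp only [hS, Set.mem_setOf_eq, edist_dist] at h
    exact (ENNReal.ofReal_le_ofReal_iff hrβ0).mp h
  have hdab : dist a b ≤ r / β + δ :=
    (dist_triangle a s b).trans (by linarith)
  -- bound coreDist B (k-δ) b
  have hcoreB : coreDist B (k - δ) b ≤ ENNReal.ofReal (dist a b + r / β + δ) := by
    apply sInf_le
    have hsub : thick S δ ∩ (B : Set M) ⊆
        (B : Set M) ∩ {y | edist b y ≤ ENNReal.ofReal (dist a b + r / β + δ)} := by
      rintro y ⟨⟨s', hs'S, hs'y⟩, hyB⟩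
      refine ⟨hyB, ?_⟩
      have hs'd : dist a s' ≤ r / β := by
        have h := hs'S
        simp only [hS, Set.mem_setOf_eq, edist_dist] at h
        exact (ENNReal.ofReal_le_ofReal_iff hrβ0).mp h
      have : dist b y ≤ dist a b + r / β + δ := by
        have := dist_triangle4 b a s' y
        have hba : dist b a = dist a b := dist_comm b a
        linarith
      simp only [Set.mem_setOf_eq, edist_dist]
      exact ENNReal.ofReal_le_ofReal this
    have hfin : ((B : Set M) ∩
        {y | edist b y ≤ ENNReal.ofReal (dist a b + r / β + δ)}).Finite :=
      B.finite_toSet.inter_of_left _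
    show (⌈k - δ⌉ : ℤ) ≤ _
    calc (⌈k - δ⌉ : ℤ) ≤ _ := hceilB
      _ ≤ _ := by exact_mod_cast Set.ncard_le_ncard hsub hfin
  refine ⟨b, hbB, ?_⟩
  rw [lam, max_le_iff]
  constructor
  · calc ENNReal.ofReal β * coreDist B (k - δ) b
        ≤ ENNReal.ofReal β * ENNReal.ofReal (dist a b + r / β + δ) := by
          exact mul_le_mul_right hcoreB _
      _ = ENNReal.ofReal (β * (dist a b + r / β + δ)) := by
          rw [ENNReal.ofReal_mul hβ.le]
      _ ≤ ENNReal.ofReal (2 * (r + β * δ)) := by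
          apply ENNReal.ofReal_le_ofReal
          have hc : β * (r / β) = r := by field_simp
          nlinarith [hdab, hβ.le]
      _ ≤ _ := ENNReal.ofReal_le_ofReal (le_max_left _ _)
  · calc edist b x ≤ edist b a + edist a x := edist_triangle b a x
      _ ≤ ENNReal.ofReal (dist a b) + ENNReal.ofReal r := by
          exact add_le_add (le_of_eq (by rw [edist_dist, dist_comm])) h2
      _ = ENNReal.ofReal (dist a b + r) := by
          rw [ENNReal.ofReal_add dist_nonneg hr.le]
      _ ≤ ENNReal.ofReal ((1 + β⁻¹) * r + δ) := by
          apply ENNReal.ofReal_le_ofReal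
          have : β⁻¹ * r = r / β := by rw [div_eq_inv_mul]
          nlinarith [hdab]
      _ ≤ _ := ENNReal.ofReal_le_ofReal (le_max_right _ _)
end

section
/- Let A, B be finite subsets of ℝⁿ, fix β > 0, and let δ > 0 be such that for every closed set S ⊆ ℝⁿ, |S ∩ A| ≤ |S^δ ∩ B| + δ. Then for all r > 0 and all k > δ, ACr^β_{r,k}(A) ⊆ ACr^β_{r', k−δ}(B), where r' = max{1, 2β}·((1+β^{-1})r + δ). -/
open Metric ENNReal

/-- Voronoi cell of `a ∈ A`. -/
def Vor {n : ℕ} (A : Finset (EuclideanSpace ℝ (Fin n))) (a : EuclideanSpace ℝ (Fin n)) :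
    Set (EuclideanSpace ℝ (Fin n)) :=
  {x | ∀ a' ∈ A, dist a x ≤ dist a' x}

/-- The Delaunay core bifiltration. -/
def ACr {n : ℕ} (A : Finset (EuclideanSpace ℝ (Fin n))) (β r k : ℝ) :
    Set (EuclideanSpace ℝ (Fin n)) :=
  ⋃ a ∈ A, ({x | lam A β k a x ≤ ENNReal.ofReal r} ∩ Vor A a)

/-!
A point of the Delaunay core of `A` at `(r, k)` is covered `k` times by the balls of radius
`(1 + β⁻¹) r` around `A`. The stability hypothesis, applied to a closed ball, trades `δ` in the
radius for `δ` in the multiplicity, moving the multicover from `A` to `B`. Finally a point covered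
`k - δ` times at radius `ρ` by `B` lies in the Voronoi cell of its nearest neighbour `b ∈ B`, whose
`k - δ` core distance is at most `2ρ`; this gives the radius `max 1 (2β) · ρ`.
-/

section MetricSpace

variable {M : Type*} [MetricSpace M]

lemma exists_mem_forall_lt_of_sInf_lt {α : Type*} [CompleteLinearOrder α] {S : Set α}
    (hS : S.Nonempty) {D : Finset α} (hD : ∀ d ∈ D, sInf S < d) : ∃ r ∈ S, ∀ d ∈ D, r < d := by
  rcases D.eq_empty_or_nonempty with rfl | hDne
  · obtain ⟨r, hr⟩ := hS
    exact ⟨r, hr, by simp⟩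
  · obtain ⟨r, hrS, hr⟩ := sInf_lt_iff.mp ((Finset.lt_inf'_iff hDne).mpr hD)
    exact ⟨r, hrS, fun d hd => hr.trans_le (D.inf'_le id hd)⟩

lemma ncard_inter_edist_le_mono (A : Finset M) (a : M) {r s : ℝ≥0∞} (h : r ≤ s) :
    ((A : Set M) ∩ {y | edist a y ≤ r}).ncard ≤ ((A : Set M) ∩ {y | edist a y ≤ s}).ncard :=
  Set.ncard_le_ncard (Set.inter_subset_inter_right _ fun _ hy => le_trans hy h)
    (A.finite_toSet.inter_of_left _)

/-- The infimum defining `coreDist` is attained. -/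
lemma le_ncard_inter_edist_le_coreDist (A : Finset M) (k : ℝ) (a : M)
    (hfin : coreDist A k a ≠ ⊤) :
    ⌈k⌉ ≤ (((A : Set M) ∩ {y | edist a y ≤ coreDist A k a}).ncard : ℤ) := by
  set S := {r : ℝ≥0∞ | ⌈k⌉ ≤ (((A : Set M) ∩ {y | edist a y ≤ r}).ncard : ℤ)}
  have hS : S.Nonempty := Set.nonempty_iff_ne_empty.mpr fun h => hfin (by simp [coreDist, S, h])
  -- Choose `r ∈ S` below every distance from `a` to `A` that exceeds the infimum.
  obtain ⟨r, hrS, hr⟩ := exists_mem_forall_lt_of_sInf_lt hS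
    (D := (A.filter fun y => coreDist A k a < edist a y).image (edist a))
    (by simp only [Finset.mem_image, Finset.mem_filter]; rintro _ ⟨y, ⟨-, hy⟩, rfl⟩; exact hy)
  have hsub : (A : Set M) ∩ {y | edist a y ≤ r} ⊆
      (A : Set M) ∩ {y | edist a y ≤ coreDist A k a} := by
    rintro y ⟨hyA, hyr⟩
    refine ⟨hyA, show edist a y ≤ _ from not_lt.mp fun hlt => ?_⟩
    exact (hr _ (Finset.mem_image_of_mem _ (Finset.mem_filter.mpr ⟨hyA, hlt⟩))).not_ge hyr
  exact hrS.trans (by exact_mod_cast Set.ncard_le_ncard hsub (A.finite_toSet.inter_of_left _))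

lemma coreDist_le_iff (A : Finset M) (k : ℝ) (a : M) {ρ : ℝ≥0∞} (hρ : ρ ≠ ⊤) :
    coreDist A k a ≤ ρ ↔ ⌈k⌉ ≤ (((A : Set M) ∩ {y | edist a y ≤ ρ}).ncard : ℤ) := by
  refine ⟨fun h => ?_, fun h => sInf_le h⟩
  exact (le_ncard_inter_edist_le_coreDist A k a (ne_top_of_le_ne_top hρ h)).trans
    (by exact_mod_cast ncard_inter_edist_le_mono A a h)

lemma coreDist_le_ofReal_iff (A : Finset M) (k : ℝ) (a : M) {ρ : ℝ} (hρ : 0 ≤ ρ) :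
    coreDist A k a ≤ ENNReal.ofReal ρ ↔ a ∈ Cov A ρ k := by
  have hball : {y | edist a y ≤ ENNReal.ofReal ρ} = closedBall a ρ := by
    ext y
    rw [Set.mem_ofPred_eq, edist_le_ofReal hρ, mem_closedBall, dist_comm]
  rw [coreDist_le_iff A k a ofReal_ne_top, hball, Cov, Set.mem_ofPred_eq]

lemma mem_Cov_of_closedBall_subset {A : Finset M} {k ρ ρ' : ℝ} {a x : M}
    (h : closedBall a ρ ⊆ closedBall x ρ') (ha : a ∈ Cov A ρ k) : x ∈ Cov A ρ' k := by
  have hcard := Set.ncard_le_ncard (Set.inter_subset_inter_right (A : Set M) h)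
    (A.finite_toSet.inter_of_left _)
  exact le_trans (α := ℤ) ha (by exact_mod_cast hcard)

lemma Cr_subset_Cov (A : Finset M) {β r : ℝ} (k : ℝ) (hβ : 0 < β) (hr : 0 ≤ r) :
    Cr A β r k ⊆ Cov A ((1 + β⁻¹) * r) k := by
  intro x hx
  simp only [Cr, Set.mem_iUnion, Set.mem_ofPred_eq, lam, max_le_iff] at hx
  obtain ⟨a, -, hcore, hdist⟩ := hx
  have hcore' : coreDist A k a ≤ ENNReal.ofReal (r / β) := by
    rw [ENNReal.ofReal_div_of_pos hβ, ENNReal.le_div_iff_mul_le (Or.inl (by simpa using hβ))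
      (Or.inl ofReal_ne_top), mul_comm]
    exact hcore
  refine mem_Cov_of_closedBall_subset (closedBall_subset_closedBall' ?_)
    ((coreDist_le_ofReal_iff A k a (by positivity)).mp hcore')
  have : (1 + β⁻¹) * r = r / β + r := by ring
  linarith [(edist_le_ofReal hr).mp hdist]

lemma thick_closedBall_subset (x : M) (ρ δ : ℝ) :
    thick (closedBall x ρ) δ ⊆ closedBall x (ρ + δ) := by
  rintro y ⟨s, hs, hsy⟩
  rw [mem_closedBall] at hs ⊢
  linarith [dist_triangle y s x, dist_comm s y]

lemma Cov_subset_Cov_of_stable {A B : Finset M} {δ : ℝ}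
    (hstab : ∀ S : Set M, IsClosed S →
      (((S ∩ (A : Set M)).ncard : ℝ)) ≤ ((thick S δ ∩ (B : Set M)).ncard : ℝ) + δ)
    (ρ k : ℝ) : Cov A ρ k ⊆ Cov B (ρ + δ) (k - δ) := by
  intro x hx
  have hthick : ((thick (closedBall x ρ) δ ∩ (B : Set M)).ncard : ℝ) ≤
      (((B : Set M) ∩ closedBall x (ρ + δ)).ncard : ℝ) := by
    rw [Set.inter_comm]
    exact_mod_cast Set.ncard_le_ncard
      (Set.inter_subset_inter_right _ (thick_closedBall_subset x ρ δ))
      (B.finite_toSet.inter_of_left _)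
  have hA : (⌈k⌉ : ℝ) ≤ ((closedBall x ρ ∩ (A : Set M)).ncard : ℝ) := by
    rw [Set.inter_comm]
    exact_mod_cast hx
  refine Int.ceil_le.mpr ?_
  push_cast
  linarith [Int.le_ceil k, hstab (closedBall x ρ) isClosed_closedBall]

lemma coreDist_le_of_mem_Cov {A : Finset M} {ρ k : ℝ} {a x : M} (hx : x ∈ Cov A ρ k)
    (ha : dist a x ≤ ρ) : coreDist A k a ≤ ENNReal.ofReal (2 * ρ) := by
  refine (coreDist_le_ofReal_iff A k a (by linarith [dist_nonneg (x := a) (y := x)])).mpr ?_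
  exact mem_Cov_of_closedBall_subset
    (closedBall_subset_closedBall' (by rw [dist_comm]; linarith)) hx

lemma exists_mem_dist_le_of_mem_Cov {A : Finset M} {ρ k : ℝ} {x : M} (hk : 0 < k)
    (hx : x ∈ Cov A ρ k) : ∃ a ∈ A, dist a x ≤ ρ := by
  have hpos : 0 < ((A : Set M) ∩ closedBall x ρ).ncard := by
    have : (0 : ℤ) < ⌈k⌉ := Int.ceil_pos.mpr hk
    have : (⌈k⌉ : ℤ) ≤ _ := hx
    omega
  obtain ⟨a, haA, hax⟩ := (Set.ncard_pos (A.finite_toSet.inter_of_left _)).mp hpos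
  exact ⟨a, haA, mem_closedBall.mp hax⟩

end MetricSpace

section Euclidean

variable {n : ℕ}

lemma ACr_subset_Cr (A : Finset (EuclideanSpace ℝ (Fin n))) (β r k : ℝ) :
    ACr A β r k ⊆ Cr A β r k :=
  Set.iUnion₂_mono fun _ _ => Set.inter_subset_left

lemma Cov_subset_ACr (B : Finset (EuclideanSpace ℝ (Fin n))) (β ρ : ℝ) {k : ℝ} (hk : 0 < k) :
    Cov B ρ k ⊆ ACr B β (max 1 (2 * β) * ρ) k := by
  intro x hx
  obtain ⟨b₀, hb₀B, hb₀x⟩ := exists_mem_dist_le_of_mem_Cov hk hx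
  obtain ⟨b, hbB, hmin⟩ := B.exists_min_image (fun b => dist b x) ⟨b₀, hb₀B⟩
  have hbx : dist b x ≤ ρ := (hmin b₀ hb₀B).trans hb₀x
  have hρ : 0 ≤ ρ := dist_nonneg.trans hbx
  simp only [ACr, Set.mem_iUnion, Set.mem_inter_iff, Set.mem_ofPred_eq, lam, max_le_iff]
  refine ⟨b, hbB, ⟨?_, ?_⟩, fun b' hb' => hmin b' hb'⟩
  · calc ENNReal.ofReal β * coreDist B k b
        ≤ ENNReal.ofReal β * ENNReal.ofReal (2 * ρ) := by
          gcongr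
          exact coreDist_le_of_mem_Cov hx hbx
      _ = ENNReal.ofReal (β * (2 * ρ)) := (ENNReal.ofReal_mul' (by positivity)).symm
      _ ≤ ENNReal.ofReal (max 1 (2 * β) * ρ) := by
          apply ENNReal.ofReal_le_ofReal
          nlinarith [le_max_right 1 (2 * β)]
  · rw [edist_le_ofReal (by positivity)]
    nlinarith [le_max_left 1 (2 * β)]

end Euclidean

theorem stmt14_general {n : ℕ} (A B : Finset (EuclideanSpace ℝ (Fin n))) (β : ℝ) (hβ : 0 < β)
    (δ : ℝ)
    (hstab : ∀ S : Set (EuclideanSpace ℝ (Fin n)), IsClosed S →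
      (((S ∩ (A : Set (EuclideanSpace ℝ (Fin n)))).ncard : ℝ)) ≤
        ((thick S δ ∩ (B : Set (EuclideanSpace ℝ (Fin n)))).ncard : ℝ) + δ)
    (r k : ℝ) (hr : 0 < r) (hk : δ < k) :
    ACr A β r k ⊆ ACr B β (max 1 (2 * β) * ((1 + β⁻¹) * r + δ)) (k - δ) := by
  intro x hx
  have hCovA : x ∈ Cov A ((1 + β⁻¹) * r) k :=
    Cr_subset_Cov A k hβ hr.le (ACr_subset_Cr A β r k hx)
  have hCovB := Cov_subset_Cov_of_stable hstab _ _ hCovA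
  exact Cov_subset_ACr B β _ (sub_pos.mpr hk) hCovB

theorem stmt14 {n : ℕ} (A B : Finset (EuclideanSpace ℝ (Fin n))) (β : ℝ) (hβ : 0 < β)
    (δ : ℝ) (hδ : 0 < δ)
    (hstab : ∀ S : Set (EuclideanSpace ℝ (Fin n)), IsClosed S →
      (((S ∩ (A : Set (EuclideanSpace ℝ (Fin n)))).ncard : ℝ)) ≤
        ((thick S δ ∩ (B : Set (EuclideanSpace ℝ (Fin n)))).ncard : ℝ) + δ)
    (r k : ℝ) (hr : 0 < r) (hk : δ < k) :
    ACr A β r k ⊆ ACr B β (max 1 (2 * β) * ((1 + β⁻¹) * r + δ)) (k - δ) :=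
  stmt14_general A B β hβ δ hstab r k hr hk
end
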